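/- arXiv:2506.12865 — 2 statements merged into one kernel-verified Lean document; each statement's English description precedes it below -/
import Mathlib

section
/- The boundary map ∂₆: C_6 → C_5 of the ℤ/2 cellular chain complex of the paper is injective; consequently H_6 of the complex vanishes. -/
abbrev Ch (ι : Type) := ι → ZMod 2

/-- basis chain corresponding to a single cell -/
def ee {ι : Type} [DecidableEq ι] (i : ι) : Ch ι := Pi.single i 1

/-- the ℤ/2-linear boundary map determined by its values on cells -/
def mkBd {ι κ : Type} [Fintype ι] (d : ι → Ch κ) : Ch ι →ₗ[ZMod 2] Ch κ where
  toFun f := ∑ i, f i • d i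
  map_add' x y := by simp [add_smul, Finset.sum_add_distrib]
  map_smul' c x := by simp [Finset.smul_sum, smul_smul]

inductive Cells5
  | B
  | C12
  | C13
  | C14
  | C15
  | C21
  | C23
  | C24
  | C25
  | C31
  | C32
  | C34
  | C35
  | C41
  | C42
  | C43
  | C45
  | C51
  | C52
  | C53
  | C54
  | D12p
  | D12m
  | D13p
  | D13m
  | D14p
  | D14m
  | D23p
  | D23m
  | D24p
  | D24m
  | D34p
  | D34m
  | Ep
  | E1
  | E2
  | E3
  | Ab23
  | Ab24
  | Ab25
  | Ab26
  | Ab34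
  | Ab35
  | Ab36
  | Ab45
  | Ab46
  | Ab56
  deriving DecidableEq

instance : Fintype Cells5 :=
  Fintype.ofList [Cells5.B, Cells5.C12, Cells5.C13, Cells5.C14, Cells5.C15, Cells5.C21, Cells5.C23, Cells5.C24, Cells5.C25, Cells5.C31, Cells5.C32, Cells5.C34, Cells5.C35, Cells5.C41, Cells5.C42, Cells5.C43, Cells5.C45, Cells5.C51, Cells5.C52, Cells5.C53, Cells5.C54, Cells5.D12p, Cells5.D12m, Cells5.D13p, Cells5.D13m, Cells5.D14p, Cells5.D14m, Cells5.D23p, Cells5.D23m, Cells5.D24p, Cells5.D24m, Cells5.D34p, Cells5.D34m, Cells5.Ep, Cells5.E1, Cells5.E2, Cells5.E3, Cells5.Ab23, Cells5.Ab24, Cells5.Ab25, Cells5.Ab26, Cells5.Ab34, Cells5.Ab35, Cells5.Ab36, Cells5.Ab45, Cells5.Ab46, Cells5.Ab56] (fun x => by cases x <;> decide)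

inductive Cells6
  | A23
  | A24
  | A25
  | A26
  | A34
  | A35
  | A36
  | A45
  | A46
  | A56
  deriving DecidableEq

instance : Fintype Cells6 :=
  Fintype.ofList [Cells6.A23, Cells6.A24, Cells6.A25, Cells6.A26, Cells6.A34, Cells6.A35, Cells6.A36, Cells6.A45, Cells6.A46, Cells6.A56] (fun x => by cases x <;> decide)

/-- boundary values on cells -/
def d6 : Cells6 → Ch Cells5
  | .A23 => ee Cells5.C12 + ee Cells5.C21 + ee Cells5.B + ee Cells5.C45 + ee Cells5.C54 + ee Cells5.Ab23 + ee Cells5.Ab26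
  | .A24 => ee Cells5.C13 + ee Cells5.B + ee Cells5.C53 + ee Cells5.D23p + ee Cells5.Ab24 + ee Cells5.Ab36
  | .A25 => ee Cells5.C14 + ee Cells5.B + ee Cells5.C35 + ee Cells5.D23m + ee Cells5.D24p + ee Cells5.Ab25 + ee Cells5.Ab46
  | .A26 => ee Cells5.C15 + ee Cells5.C34 + ee Cells5.C43 + ee Cells5.D24m + ee Cells5.Ab26 + ee Cells5.Ab56
  | .A34 => ee Cells5.B + ee Cells5.C31 + ee Cells5.C52 + ee Cells5.D13p + ee Cells5.D23m + ee Cells5.Ab34 + ee Cells5.Ab45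
  | .A35 => ee Cells5.B + ee Cells5.D12p + ee Cells5.D13m + ee Cells5.D14p + ee Cells5.D23p + ee Cells5.D24m + ee Cells5.D34p + ee Cells5.Ep
  | .A36 => ee Cells5.C42 + ee Cells5.D12p + ee Cells5.D14m + ee Cells5.D24p + ee Cells5.D34m + ee Cells5.E3 + ee Cells5.Ab36 + ee Cells5.Ab34
  | .A45 => ee Cells5.B + ee Cells5.C25 + ee Cells5.C41 + ee Cells5.D12m + ee Cells5.D14p + ee Cells5.D34m + ee Cells5.E2 + ee Cells5.Ab45 + ee Cells5.Ab25
  | .A46 => ee Cells5.C24 + ee Cells5.D12m + ee Cells5.D13p + ee Cells5.D14m + ee Cells5.D34p + ee Cells5.E1 + ee Cells5.Ab46 + ee Cells5.Ab24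
  | .A56 => ee Cells5.C23 + ee Cells5.C32 + ee Cells5.C51 + ee Cells5.D13m + ee Cells5.Ab56 + ee Cells5.Ab23

/-- the boundary operator -/
def bd6 : Ch Cells6 →ₗ[ZMod 2] Ch Cells5 := mkBd d6


/-!
Every 6-cell has a private face: a 5-cell occurring in its own boundary and in no other one
(`privateFace`). Reading off the coefficients of `∂₆ x` at these faces
recovers `x`, so `∂₆` has a left inverse.
-/

theorem mkBd_apply {ι κ : Type} [Fintype ι] (d : ι → Ch κ) (f : Ch ι) (k : κ) :
    mkBd d f k = ∑ i, f i * d i k := by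
  simp [mkBd]

theorem mkBd_comp_of_comp_eq_ee {ι κ : Type} [Fintype ι] [DecidableEq ι] {d : ι → Ch κ}
    {c : ι → κ} (hc : ∀ j, d j ∘ c = ee j) (f : Ch ι) : mkBd d f ∘ c = f := by
  funext i
  have hdc : ∀ j, d j (c i) = ee j i := fun j => congrFun (hc j) i
  simp [mkBd_apply, hdc, ee, Pi.single_apply]

theorem mkBd_injective_of_comp_eq_ee {ι κ : Type} [Fintype ι] [DecidableEq ι] {d : ι → Ch κ}
    {c : ι → κ} (hc : ∀ j, d j ∘ c = ee j) : Function.Injective (mkBd d) :=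
  Function.LeftInverse.injective (g := (· ∘ c)) (mkBd_comp_of_comp_eq_ee hc)

def privateFace : Cells6 → Cells5
  | .A23 => .C12
  | .A24 => .C13
  | .A25 => .C14
  | .A26 => .C15
  | .A34 => .C31
  | .A35 => .Ep
  | .A36 => .E3
  | .A45 => .E2
  | .A46 => .E1
  | .A56 => .C23

theorem d6_comp_privateFace (j : Cells6) : d6 j ∘ privateFace = ee j := by
  funext i
  cases j <;> cases i <;> decide

/-- ∂₆ is injective; consequently H₆ of the complex vanishes. -/
theorem bd6_injective : Function.Injective bd6 ∧ LinearMap.ker bd6 = ⊥ :=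
  have hinj : Function.Injective bd6 := mkBd_injective_of_comp_eq_ee d6_comp_privateFace
  ⟨hinj, LinearMap.ker_eq_bot.mpr hinj⟩
end

section
/- In the ℤ/2 chain complex of the paper, the class [Θ] generates H_1 and is nonzero: Θ ∈ ker ∂₁ = C_1's cycle space restricted appropriately, Θ is not in the image of ∂₂, and every 1-cycle is homologous to 0 or to Θ̄; concretely, the quotient of the span of {Ȳ₁,Ȳ₂,Ū₁,Ū₂,Z̄,Θ̄,∇} by the image of ∂₂ is one-dimensional, spanned by the image of Θ̄. -/
inductive Cells1
  | Yb1
  | Yb2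
  | Ub1
  | Ub2
  | Zb
  | Thb
  | Nab
  deriving DecidableEq

instance : Fintype Cells1 where
  elems := {.Yb1, .Yb2, .Ub1, .Ub2, .Zb, .Thb, .Nab}
  complete := by intro x; cases x <;> simp

inductive Cells2
  | Y1
  | Y2
  | U1
  | U2
  | Z
  | Th
  | Lb123
  | Lb231
  | Lb312
  | Lb132
  | Lb213
  | Lb321
  | Mb1
  | Mb2
  | Mb3
  | Nb1
  | Nb2
  | Nb3
  | Pb1
  | Pb2
  | Sb1
  | Sb2
  | Xbp
  | Xbm
  | Vb1p
  | Vb2p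
  | Vb1m
  | Vb2m
  | Omb
  deriving DecidableEq

instance : Fintype Cells2 where
  elems := {.Y1, .Y2, .U1, .U2, .Z, .Th, .Lb123, .Lb231, .Lb312, .Lb132, .Lb213, .Lb321,
    .Mb1, .Mb2, .Mb3, .Nb1, .Nb2, .Nb3, .Pb1, .Pb2, .Sb1, .Sb2, .Xbp, .Xbm,
    .Vb1p, .Vb2p, .Vb1m, .Vb2m, .Omb}
  complete := by intro x; cases x <;> simp

/-- boundary values on cells -/
def d2 : Cells2 → Ch Cells1
  | .Y1 => ee Cells1.Nab + ee Cells1.Yb1 + ee Cells1.Yb2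
  | .Y2 => ee Cells1.Nab + ee Cells1.Yb2 + ee Cells1.Yb1
  | .U1 => ee Cells1.Nab + ee Cells1.Ub1 + ee Cells1.Ub2
  | .U2 => ee Cells1.Nab + ee Cells1.Ub2 + ee Cells1.Ub1
  | .Z => ee Cells1.Nab
  | .Th => 0
  | .Lb123 => ee Cells1.Ub1 + ee Cells1.Zb + ee Cells1.Yb2
  | .Lb231 => ee Cells1.Yb1 + ee Cells1.Ub2 + ee Cells1.Zb
  | .Lb312 => ee Cells1.Zb + ee Cells1.Yb2 + ee Cells1.Ub2
  | .Lb132 => ee Cells1.Yb1 + ee Cells1.Zb + ee Cells1.Ub2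
  | .Lb213 => ee Cells1.Ub1 + ee Cells1.Yb2 + ee Cells1.Zb
  | .Lb321 => ee Cells1.Zb + ee Cells1.Ub2 + ee Cells1.Yb2
  | .Mb1 => ee Cells1.Ub1 + ee Cells1.Yb1 + ee Cells1.Ub2
  | .Mb2 => ee Cells1.Ub1 + ee Cells1.Ub2 + ee Cells1.Yb1
  | .Mb3 => ee Cells1.Yb2
  | .Nb1 => ee Cells1.Yb1 + ee Cells1.Ub2 + ee Cells1.Yb2
  | .Nb2 => ee Cells1.Yb1 + ee Cells1.Yb2 + ee Cells1.Ub2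
  | .Nb3 => ee Cells1.Ub1
  | .Pb1 => 0
  | .Pb2 => 0
  | .Sb1 => 0
  | .Sb2 => 0
  | .Xbp => ee Cells1.Yb1 + ee Cells1.Yb2
  | .Xbm => ee Cells1.Yb1 + ee Cells1.Yb2
  | .Vb1p => ee Cells1.Yb1 + ee Cells1.Ub1
  | .Vb2p => ee Cells1.Yb2 + ee Cells1.Ub2
  | .Vb1m => ee Cells1.Yb1 + ee Cells1.Ub1
  | .Vb2m => ee Cells1.Yb2 + ee Cells1.Ub2
  | .Omb => 0

/-- the boundary operator -/
def bd2 : Ch Cells2 →ₗ[ZMod 2] Ch Cells1 := mkBd d2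


/-!
Every 2-cell has a boundary avoiding Θ̄, while every other 1-cell is a boundary:
∇ = ∂Z, Ȳ₂ = ∂M̄₃, Ū₁ = ∂N̄₃, Ȳ₁ = ∂(X̄⁺ + M̄₃), Ū₂ = ∂(V̄₂⁺ + M̄₃), Z̄ = ∂(L̄₁₂₃ + N̄₃ + M̄₃).
Hence im ∂₂ is exactly the hyperplane of 1-chains with vanishing Θ̄-coordinate, and the
quotient is `ZMod 2`, generated by the class of Θ̄.
-/

lemma range_mkBd_le_ker_proj {ι κ : Type} [Fintype κ] {d : κ → Ch ι} {j : ι}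
    (h : ∀ k, d k j = 0) : LinearMap.range (mkBd d) ≤ LinearMap.ker (LinearMap.proj j) := by
  rintro _ ⟨m, rfl⟩
  simp [mkBd, h]

section Hyperplane

variable {ι : Type} [DecidableEq ι] (j : ι)

local notation "K" => LinearMap.ker (LinearMap.proj j : Ch ι →ₗ[ZMod 2] ZMod 2)
local notation "H" => Ch ι ⧸ K

lemma ker_proj_le_of_ee_mem [Fintype ι] {p : Submodule (ZMod 2) (Ch ι)}
    (h : ∀ i, i ≠ j → ee i ∈ p) : K ≤ p := by
  intro c hc
  rw [← Finset.univ_sum_single c]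
  refine Submodule.sum_mem p fun i _ => ?_
  by_cases hij : i = j
  · subst hij
    simp [show c i = 0 from hc]
  · have := p.smul_mem (c i) (h i hij)
    rwa [ee, ← Pi.single_smul, smul_eq_mul, mul_one] at this

lemma ee_notMem_ker_proj : ee j ∉ K := by
  simp [ee]

lemma mem_ker_proj_or_add_ee_mem (c : Ch ι) : c ∈ K ∨ c + ee j ∈ K := by
  simp only [LinearMap.mem_ker, LinearMap.proj_apply, Pi.add_apply, ee, Pi.single_eq_same]
  have two_valued : ∀ x : ZMod 2, x = 0 ∨ x + 1 = 0 := by decide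
  exact two_valued (c j)

lemma finrank_quotient_ker_proj : Module.finrank (ZMod 2) H = 1 := by
  have hsurj : Function.Surjective (LinearMap.proj j : Ch ι →ₗ[ZMod 2] ZMod 2) :=
    fun x => ⟨Pi.single j x, by simp⟩
  have e := (LinearMap.proj j : Ch ι →ₗ[ZMod 2] ZMod 2).quotKerEquivOfSurjective hsurj
  exact e.finrank_eq.trans (Module.finrank_self _)

lemma span_mk_ee_eq_top [Fintype ι] :
    Submodule.span (ZMod 2) {(Submodule.Quotient.mk (ee j) : H)} = ⊤ := by
  have hne : (Submodule.Quotient.mk (ee j) : H) ≠ 0 :=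
    fun h => ee_notMem_ker_proj j ((Submodule.Quotient.mk_eq_zero _).mp h)
  apply Submodule.eq_top_of_finrank_eq
  rw [finrank_span_singleton hne, finrank_quotient_ker_proj]

end Hyperplane

def bd2Preimage : Cells1 → Ch Cells2
  | .Yb1 => ee Cells2.Xbp + ee Cells2.Mb3
  | .Yb2 => ee Cells2.Mb3
  | .Ub1 => ee Cells2.Nb3
  | .Ub2 => ee Cells2.Vb2p + ee Cells2.Mb3
  | .Zb => ee Cells2.Lb123 + ee Cells2.Nb3 + ee Cells2.Mb3
  | .Thb => 0
  | .Nab => ee Cells2.Z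

lemma bd2_bd2Preimage : ∀ i, i ≠ Cells1.Thb → bd2 (bd2Preimage i) = ee i := by
  decide

lemma d2_apply_Thb : ∀ k, d2 k Cells1.Thb = 0 := by
  decide

lemma range_bd2 : LinearMap.range bd2 = LinearMap.ker (LinearMap.proj Cells1.Thb) :=
  le_antisymm (range_mkBd_le_ker_proj d2_apply_Thb)
    (ker_proj_le_of_ee_mem _ fun i hi => ⟨_, bd2_bd2Preimage i hi⟩)

/-- [Θ̄] generates H₁ and is nonzero: Θ̄ ∉ im ∂₂, every 1-chain is congruent to
0 or Θ̄ modulo im ∂₂, the quotient C₁ / im ∂₂ is one-dimensional and spanned by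
the image of Θ̄. -/
theorem Theta_generates_H1 :
    ee Cells1.Thb ∉ LinearMap.range bd2 ∧
    (∀ c : Ch Cells1, c ∈ LinearMap.range bd2 ∨
      c + ee Cells1.Thb ∈ LinearMap.range bd2) ∧
    Module.finrank (ZMod 2) (Ch Cells1 ⧸ LinearMap.range bd2) = 1 ∧
    Submodule.span (ZMod 2)
      {(Submodule.Quotient.mk (ee Cells1.Thb) :
          Ch Cells1 ⧸ LinearMap.range bd2)} = ⊤ := by
  rw [range_bd2]
  exact ⟨ee_notMem_ker_proj _, mem_ker_proj_or_add_ee_mem _, finrank_quotient_ker_proj _,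
    span_mk_ee_eq_top _⟩
end
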